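/- arXiv:2210.09589 — 9 statements merged into one kernel-verified Lean document; each statement's English description precedes it below -/
import Mathlib

section
/- Let X ⊆ ℝ^n, f : ℝ^n → ℝ continuous, and ρ₁, ρ₂ > 0. If x* ∈ X is a local minimizer of x ↦ f(x) + ρ₁‖x‖₀ over X, then x* is also a local minimizer of x ↦ f(x) + ρ₂‖x‖₀ over X. -/
/-! Near `x*` every nonzero coordinate of `x*` stays nonzero, so `‖x‖₀` either equals `‖x*‖₀` or
exceeds it by at least one. In the first case the two penalised objectives differ from `f` by the
same constant, so the local minimality of `x*` transfers; in the second, the penalty jump `ρ₂`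
beats the oscillation of the continuous `f`, which is below `ρ₂` close to `x*`. -/

open Finset

noncomputable def norm0 {n : ℕ} (x : Fin n → ℝ) : ℝ :=
  ((Finset.univ.filter fun i => x i ≠ 0).card : ℝ)

open Filter Topology

theorem IsLocalMinOn.add_mul_of_eventually_eq_or_jump {α : Type*} [TopologicalSpace α]
    {f g : α → ℝ} {s : Set α} {a : α} {ρ₁ ρ₂ : ℝ} (hf : ContinuousAt f a) (hρ₂ : 0 < ρ₂)
    (hg : ∀ᶠ x in 𝓝 a, g x = g a ∨ g a + 1 ≤ g x)
    (hmin : IsLocalMinOn (fun x => f x + ρ₁ * g x) s a) :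
    IsLocalMinOn (fun x => f x + ρ₂ * g x) s a := by
  have hf_near : ∀ᶠ x in 𝓝 a, f a - ρ₂ < f x :=
    hf.eventually (eventually_gt_nhds (by linarith))
  filter_upwards [hmin, nhdsWithin_le_nhds hg, nhdsWithin_le_nhds hf_near]
    with x hx_min hx_jump hx_near
  rcases hx_jump with h_eq | h_jump
  · simp only [h_eq] at hx_min ⊢
    linarith
  · nlinarith

theorem eventually_forall_ne_zero_of_ne_zero {ι M : Type*} [Finite ι] [TopologicalSpace M]
    [T1Space M] [Zero M] (x₀ : ι → M) : ∀ᶠ x in 𝓝 x₀, ∀ i, x₀ i ≠ 0 → x i ≠ 0 :=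
  eventually_all.2 fun i => by
    by_cases hi : x₀ i = 0
    · exact .of_forall fun _ h => absurd hi h
    · exact ((continuous_apply i).continuousAt.eventually_ne hi).mono fun _ h _ => h

theorem norm0_le_norm0 {n : ℕ} {x y : Fin n → ℝ} (h : ∀ i, x i ≠ 0 → y i ≠ 0) :
    norm0 x ≤ norm0 y := by
  unfold norm0
  exact_mod_cast card_le_card fun i => by simpa using h i

theorem eventually_norm0_eq_or_add_one_le {n : ℕ} (x₀ : Fin n → ℝ) :
    ∀ᶠ x in 𝓝 x₀, norm0 x = norm0 x₀ ∨ norm0 x₀ + 1 ≤ norm0 x := by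
  filter_upwards [eventually_forall_ne_zero_of_ne_zero x₀] with x hx
  have hle : norm0 x₀ ≤ norm0 x := norm0_le_norm0 hx
  unfold norm0 at hle ⊢
  norm_cast at hle ⊢
  omega

theorem stmt4_general {n : ℕ} (X : Set (Fin n → ℝ)) (f : (Fin n → ℝ) → ℝ)
    (hf : Continuous f) (ρ₁ ρ₂ : ℝ) (hρ₂ : 0 < ρ₂)
    (xstar : Fin n → ℝ)
    (hmin : IsLocalMinOn (fun x => f x + ρ₁ * norm0 x) X xstar) :
    IsLocalMinOn (fun x => f x + ρ₂ * norm0 x) X xstar :=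
  hmin.add_mul_of_eventually_eq_or_jump hf.continuousAt hρ₂
    (eventually_norm0_eq_or_add_one_le xstar)

theorem stmt4 {n : ℕ} (X : Set (Fin n → ℝ)) (f : (Fin n → ℝ) → ℝ)
    (hf : Continuous f) (ρ₁ ρ₂ : ℝ) (hρ₁ : 0 < ρ₁) (hρ₂ : 0 < ρ₂)
    (xstar : Fin n → ℝ) (hx : xstar ∈ X)
    (hmin : IsLocalMinOn (fun x => f x + ρ₁ * norm0 x) X xstar) :
    IsLocalMinOn (fun x => f x + ρ₂ * norm0 x) X xstar :=
  stmt4_general X f hf ρ₁ ρ₂ hρ₂ xstar hmin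
end

section
/- Let X ⊆ ℝ^n, f continuous, ρ > 0. If x* is a local minimizer of x ↦ f(x) + ρ‖x‖₀ over X, then the pair (x*, y*), with y*_i = 1 for x*_i = 0 and y*_i = 0 otherwise, is a local minimizer of (x,y) ↦ f(x) + ρ(n - ∑_i y_i) over the feasible set {(x,y) : x ∈ X, x ∘ y = 0, y ≤ e}. -/
open Finset

/-! The fibre of the lifted problem over x has optimal value f x + ρ ‖x‖₀, attained at the
indicator of the zeros of x: complementarity x_i y_i = 0 forces y to vanish on the support of x,
and y ≤ 1 bounds ∑ y_i by the number of zeros of x. So the lifted objective dominates the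
original one composed with the projection (x, y) ↦ x, with equality at (x*, y*), and the local
minimality of x* lifts through the continuous projection. -/

theorem IsLocalMinOn.of_le_comp_fst {α β γ : Type*} [TopologicalSpace α] [TopologicalSpace β]
    [Preorder γ] {g : α → γ} {F : α × β → γ} {s : Set α} {t : Set (α × β)} {p : α × β}
    (hg : IsLocalMinOn g s p.1) (hts : Set.MapsTo Prod.fst t s)
    (hle : ∀ q ∈ t, g q.1 ≤ F q) (heq : F p = g p.1) : IsLocalMinOn F t p := by
  have hcomp : IsLocalMinOn (g ∘ Prod.fst) t p :=
    hg.comp_tendsto (continuous_fst.continuousWithinAt.tendsto_nhdsWithin hts)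
  filter_upwards [hcomp, self_mem_nhdsWithin] with q hq hqt
  exact heq.trans_le (hq.trans (hle q hqt))

theorem card_filter_eq_zero_eq_sub_norm0 {n : ℕ} (x : Fin n → ℝ) :
    (#{i | x i = 0} : ℝ) = n - norm0 x := by
  rw [norm0, eq_sub_iff_add_eq, ← Nat.cast_add, card_filter_add_card_filter_not, card_univ,
    Fintype.card_fin]

theorem norm0_le_sub_sum {n : ℕ} (x y : Fin n → ℝ) (hxy : ∀ i, x i * y i = 0)
    (hy : ∀ i, y i ≤ 1) : norm0 x ≤ n - ∑ i, y i := by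
  rw [le_sub_comm]
  have hsupp : ∑ i with x i ≠ 0, y i = 0 :=
    sum_eq_zero fun i hi => (mul_eq_zero.mp (hxy i)).resolve_left (mem_filter.mp hi).2
  calc ∑ i, y i = ∑ i with x i = 0, y i := by
        rw [← sum_filter_add_sum_filter_not univ (fun i => x i = 0), hsupp, add_zero]
    _ ≤ ∑ i with x i = 0, (1 : ℝ) := sum_le_sum fun i _ => hy i
    _ = n - norm0 x := by rw [sum_const, nsmul_one, card_filter_eq_zero_eq_sub_norm0]

theorem sum_ite_eq_zero_eq_sub_norm0 {n : ℕ} (x : Fin n → ℝ) :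
    ∑ i, (if x i = 0 then (1 : ℝ) else 0) = n - norm0 x := by
  rw [sum_boole, card_filter_eq_zero_eq_sub_norm0]

theorem stmt6_general {n : ℕ} (X : Set (Fin n → ℝ)) (f : (Fin n → ℝ) → ℝ)
    (ρ : ℝ) (hρ : 0 < ρ)
    (xstar ystar : Fin n → ℝ)
    (hy : ystar = fun i => if xstar i = 0 then 1 else 0)
    (hmin : IsLocalMinOn (fun x => f x + ρ * norm0 x) X xstar) :
    IsLocalMinOn (fun p : (Fin n → ℝ) × (Fin n → ℝ) => f p.1 + ρ * ((n : ℝ) - ∑ i, p.2 i))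
      {p | p.1 ∈ X ∧ (∀ i, p.1 i * p.2 i = 0) ∧ ∀ i, p.2 i ≤ 1}
      (xstar, ystar) := by
  subst hy
  refine hmin.of_le_comp_fst (fun p hp => hp.1) ?_ ?_
  · rintro ⟨x, y⟩ ⟨-, hxy, hy⟩
    dsimp only
    gcongr
    exact norm0_le_sub_sum x y hxy hy
  · simp only [sum_ite_eq_zero_eq_sub_norm0, sub_sub_cancel]

theorem stmt6 {n : ℕ} (X : Set (Fin n → ℝ)) (f : (Fin n → ℝ) → ℝ)
    (hf : Continuous f) (ρ : ℝ) (hρ : 0 < ρ)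
    (xstar ystar : Fin n → ℝ)
    (hy : ystar = fun i => if xstar i = 0 then 1 else 0)
    (hmin : IsLocalMinOn (fun x => f x + ρ * norm0 x) X xstar) :
    IsLocalMinOn (fun p : (Fin n → ℝ) × (Fin n → ℝ) => f p.1 + ρ * ((n : ℝ) - ∑ i, p.2 i))
      {p | p.1 ∈ X ∧ (∀ i, p.1 i * p.2 i = 0) ∧ ∀ i, p.2 i ≤ 1}
      (xstar, ystar) :=
  stmt6_general X f ρ hρ xstar ystar hy hmin
end

section
/- Let X ⊆ ℝ^n, f continuous, ρ > 0, and let y* be defined by y*_i = 1 if x*_i = 0 and y*_i = 0 otherwise. If (x*, y*) is a local minimizer of (x,y) ↦ f(x) + ρ(n - ∑_i y_i) over {(x,y) : x ∈ X, x ∘ y = 0, y ≤ e}, then x* is a local minimizer of x ↦ f(x) + ρ‖x‖₀ over X. -/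
/-!
Near `x*` every nonzero entry of `x*` stays nonzero, so the support of `x` contains that of `x*`.
If the supports agree, `(x, y*)` is feasible for the complementarity problem with the same value
of `n - ∑ yᵢ`, and local minimality of `(x*, y*)` gives `f x* ≤ f x`. Otherwise
`‖x‖₀ ≥ ‖x*‖₀ + 1`, and the penalty gains `ρ`, which by continuity outweighs `f x* - f x`.
-/

open Finset Filter Topology

lemma eventually_nhds_ne_zero_of_ne_zero {ι M : Type*} [Finite ι] [TopologicalSpace M]
    [T1Space M] [Zero M] (x : ι → M) : ∀ᶠ y in 𝓝 x, ∀ i, x i ≠ 0 → y i ≠ 0 := by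
  refine eventually_all.mpr fun i => ?_
  by_cases hi : x i = 0
  · exact .of_forall fun _ h => absurd hi h
  · exact ((continuous_apply i).continuousAt.eventually_ne hi).mono fun _ hy _ => hy

lemma norm0_eq_or_add_one_le {n : ℕ} {x y : Fin n → ℝ} (h : ∀ i, x i ≠ 0 → y i ≠ 0) :
    (norm0 y = norm0 x ∧ ∀ i, x i = 0 → y i = 0) ∨ norm0 x + 1 ≤ norm0 y := by
  have hsub : (univ.filter fun i => x i ≠ 0) ⊆ univ.filter fun i => y i ≠ 0 := by
    intro i
    simpa using h i
  rcases (card_le_card hsub).eq_or_lt with hcard | hcard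
  · have heq := eq_of_subset_of_card_le hsub hcard.ge
    refine .inl ⟨by rw [norm0, norm0, heq], fun i hx => ?_⟩
    by_contra hy
    have : i ∈ univ.filter fun i => y i ≠ 0 := by simpa using hy
    simp [← heq, hx] at this
  · exact .inr (by unfold norm0; exact_mod_cast hcard)

lemma isLocalMinOn_add_mul_norm0 {n : ℕ} {X : Set (Fin n → ℝ)} {f : (Fin n → ℝ) → ℝ}
    {x₀ : Fin n → ℝ} {ρ : ℝ} (hf : LowerSemicontinuousAt f x₀) (hρ : 0 < ρ)
    (hmin : IsLocalMinOn f {x | x ∈ X ∧ ∀ i, x₀ i = 0 → x i = 0} x₀) :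
    IsLocalMinOn (fun x => f x + ρ * norm0 x) X x₀ := by
  have hjump : ∀ᶠ x in 𝓝 x₀, f x₀ - ρ < f x := hf _ (by linarith)
  refine eventually_nhdsWithin_iff.mpr ?_
  filter_upwards [eventually_nhdsWithin_iff.mp hmin, hjump,
    eventually_nhds_ne_zero_of_ne_zero x₀] with x hsame hjump hsupp hX
  rcases norm0_eq_or_add_one_le hsupp with ⟨hnorm, hzero⟩ | hnorm
  · simpa [hnorm] using hsame ⟨hX, hzero⟩
  · nlinarith

theorem stmt7 {n : ℕ} (X : Set (Fin n → ℝ)) (f : (Fin n → ℝ) → ℝ)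
    (hf : Continuous f) (ρ : ℝ) (hρ : 0 < ρ)
    (xstar ystar : Fin n → ℝ)
    (hy : ystar = fun i => if xstar i = 0 then 1 else 0)
    (hmin : IsLocalMinOn
      (fun p : (Fin n → ℝ) × (Fin n → ℝ) => f p.1 + ρ * ((n : ℝ) - ∑ i, p.2 i))
      {p | p.1 ∈ X ∧ (∀ i, p.1 i * p.2 i = 0) ∧ ∀ i, p.2 i ≤ 1}
      (xstar, ystar)) :
    IsLocalMinOn (fun x => f x + ρ * norm0 x) X xstar := by
  refine isLocalMinOn_add_mul_norm0 hf.continuousAt.lowerSemicontinuousAt hρ ?_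
  have hfeas : Set.MapsTo (fun x => (x, ystar)) {x | x ∈ X ∧ ∀ i, xstar i = 0 → x i = 0}
      {p | p.1 ∈ X ∧ (∀ i, p.1 i * p.2 i = 0) ∧ ∀ i, p.2 i ≤ 1} := by
    rintro x ⟨hX, hzero⟩
    subst hy
    refine ⟨hX, fun i => ?_, fun i => ?_⟩ <;> by_cases hi : xstar i = 0 <;> simp [hi, hzero]
  have hslice := hmin.comp_tendsto (g := fun x => (x, ystar)) (b := xstar)
    ((Continuous.prodMk_left _).continuousWithinAt.tendsto_nhdsWithin hfeas)
  exact hslice.mono fun x hx => by simpa using hx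
end

section
/- Let X ⊆ ℝ^n, f continuous, ρ > 0. Then x* is a global minimizer of x ↦ f(x) + ρ‖x‖₀ over X if and only if there exists y* ∈ ℝ^n such that (x*, y*) is a global minimizer of (x,y) ↦ f(x) + ρ(n - ∑_i y_i) over {(x,y) : x ∈ X, x ∘ y = 0, y ≤ e}. -/
/-! For fixed `x`, the constraints `x i * y i = 0`, `y i ≤ 1` force `y i ≤ 0` off the zero set of
`x` and `y i ≤ 1` on it, so `n - ∑ i, y i ≥ ‖x‖₀`, with equality for the indicator of the zero set.
Hence `‖x‖₀` is the minimum of `n - ∑ i, y i` over the feasible `y`, and minimizing over `(x, y)`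
is the same as minimizing `f x + ρ ‖x‖₀` over `x`. -/

open Finset

section ZeroIndicator

variable {n : ℕ}

noncomputable def zeroIndicator (x : Fin n → ℝ) (i : Fin n) : ℝ :=
  if x i = 0 then 1 else 0

lemma mul_zeroIndicator_eq_zero (x : Fin n → ℝ) (i : Fin n) : x i * zeroIndicator x i = 0 := by
  by_cases h : x i = 0 <;> simp [zeroIndicator, h]

lemma zeroIndicator_le_one (x : Fin n → ℝ) (i : Fin n) : zeroIndicator x i ≤ 1 := by
  by_cases h : x i = 0 <;> simp [zeroIndicator, h]

lemma card_sub_sum_zeroIndicator (x : Fin n → ℝ) : (n : ℝ) - ∑ i, zeroIndicator x i = norm0 x := by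
  have hsplit : ∀ i, zeroIndicator x i = 1 - if x i ≠ 0 then 1 else 0 := fun i => by
    by_cases h : x i = 0 <;> simp [zeroIndicator, h]
  simp only [hsplit, sum_sub_distrib, sum_boole, norm0, sum_const, card_univ, Fintype.card_fin,
    nsmul_eq_mul, mul_one, sub_sub_cancel]

lemma le_zeroIndicator {x y : Fin n → ℝ} {i : Fin n} (hxy : x i * y i = 0) (hy : y i ≤ 1) :
    y i ≤ zeroIndicator x i := by
  by_cases h : x i = 0
  · simpa [zeroIndicator, h] using hy
  · simp [zeroIndicator, h, (mul_eq_zero.mp hxy).resolve_left h]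

lemma norm0_le_card_sub_sum {x y : Fin n → ℝ} (hxy : ∀ i, x i * y i = 0) (hy : ∀ i, y i ≤ 1) :
    norm0 x ≤ (n : ℝ) - ∑ i, y i := by
  rw [← card_sub_sum_zeroIndicator]
  gcongr with i
  exact le_zeroIndicator (hxy i) (hy i)

end ZeroIndicator

theorem stmt9_general {n : ℕ} (X : Set (Fin n → ℝ)) (f : (Fin n → ℝ) → ℝ)
    (ρ : ℝ) (hρ : 0 < ρ) (xstar : Fin n → ℝ) :
    (xstar ∈ X ∧ ∀ x ∈ X, f xstar + ρ * norm0 xstar ≤ f x + ρ * norm0 x) ↔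
    (∃ ystar : Fin n → ℝ,
      (xstar ∈ X ∧ (∀ i, xstar i * ystar i = 0) ∧ (∀ i, ystar i ≤ 1)) ∧
      ∀ (x y : Fin n → ℝ), x ∈ X → (∀ i, x i * y i = 0) → (∀ i, y i ≤ 1) →
        f xstar + ρ * ((n : ℝ) - ∑ i, ystar i) ≤ f x + ρ * ((n : ℝ) - ∑ i, y i)) := by
  constructor
  · rintro ⟨hxstar, hopt⟩
    refine ⟨zeroIndicator xstar,
      ⟨hxstar, mul_zeroIndicator_eq_zero xstar, zeroIndicator_le_one xstar⟩,
      fun x y hx hxy hy => ?_⟩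
    calc f xstar + ρ * ((n : ℝ) - ∑ i, zeroIndicator xstar i)
        = f xstar + ρ * norm0 xstar := by rw [card_sub_sum_zeroIndicator]
      _ ≤ f x + ρ * norm0 x := hopt x hx
      _ ≤ f x + ρ * ((n : ℝ) - ∑ i, y i) := by gcongr; exact norm0_le_card_sub_sum hxy hy
  · rintro ⟨ystar, ⟨hxstar, hxystar, hystar⟩, hopt⟩
    refine ⟨hxstar, fun x hx => ?_⟩
    calc f xstar + ρ * norm0 xstar
        ≤ f xstar + ρ * ((n : ℝ) - ∑ i, ystar i) := by
          gcongr; exact norm0_le_card_sub_sum hxystar hystar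
      _ ≤ f x + ρ * ((n : ℝ) - ∑ i, zeroIndicator x i) :=
          hopt x _ hx (mul_zeroIndicator_eq_zero x) (zeroIndicator_le_one x)
      _ = f x + ρ * norm0 x := by rw [card_sub_sum_zeroIndicator]

theorem stmt9 {n : ℕ} (X : Set (Fin n → ℝ)) (f : (Fin n → ℝ) → ℝ)
    (hf : Continuous f) (ρ : ℝ) (hρ : 0 < ρ) (xstar : Fin n → ℝ) :
    (xstar ∈ X ∧ ∀ x ∈ X, f xstar + ρ * norm0 xstar ≤ f x + ρ * norm0 x) ↔
    (∃ ystar : Fin n → ℝ,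
      (xstar ∈ X ∧ (∀ i, xstar i * ystar i = 0) ∧ (∀ i, ystar i ≤ 1)) ∧
      ∀ (x y : Fin n → ℝ), x ∈ X → (∀ i, x i * y i = 0) → (∀ i, y i ≤ 1) →
        f xstar + ρ * ((n : ℝ) - ∑ i, ystar i) ≤ f x + ρ * ((n : ℝ) - ∑ i, y i)) :=
  stmt9_general X f ρ hρ xstar
end

section
/- Let f : ℝ^n → ℝ, g : ℝ^n → ℝ^m, h : ℝ^n → ℝ^p be continuously differentiable, ρ > 0, and define L^{SP}(x,λ,μ) = f(x) + λᵀg(x) + μᵀh(x). A point x* is S-stationary (i.e., there exist λ*, μ* with ∂L^{SP}/∂x_i(x*,λ*,μ*) = 0 for all i with x*_i ≠ 0, λ* ≥ 0, g(x*) ≤ 0, λ* ∘ g(x*) = 0, h(x*) = 0) if and only if there exist y*, γ* such that (x*, y*, λ*, μ*, γ*) satisfies the KKT conditions of SPOsq: ∇ₓL^{SP}(x*,λ*,μ*) + γ* ∘ y* = 0, ρ(y* - e) + γ* ∘ x* = 0, λ* ≥ 0, g(x*) ≤ 0, λ* ∘ g(x*) = 0, h(x*) = 0, x* ∘ y* =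 0. -/
/-!
The KKT system of SPOsq decouples coordinatewise. In coordinate `i`, `xᵢ yᵢ = 0` forces `yᵢ = 0`
when `xᵢ ≠ 0`, and then the stationarity row `∂ᵢL + γᵢ yᵢ = 0` is exactly S-stationarity in that
coordinate. Conversely, S-stationarity is met by `yᵢ = 1, γᵢ = -∂ᵢL` where `xᵢ = 0` and by
`yᵢ = 0, γᵢ = ρ / xᵢ` where `xᵢ ≠ 0`.
-/

open Finset

noncomputable def LSP {n m p : ℕ} (f : (Fin n → ℝ) → ℝ)
    (g : (Fin n → ℝ) → Fin m → ℝ) (h : (Fin n → ℝ) → Fin p → ℝ)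
    (lam : Fin m → ℝ) (mu : Fin p → ℝ) (x : Fin n → ℝ) : ℝ :=
  f x + ∑ j, lam j * g x j + ∑ j, mu j * h x j

theorem imp_eq_zero_iff_exists_sq_kkt (ρ d x : ℝ) :
    (x ≠ 0 → d = 0) ↔
      ∃ y γ : ℝ, d + γ * y = 0 ∧ ρ * (y - 1) + γ * x = 0 ∧ x * y = 0 := by
  constructor
  · intro hd
    by_cases hx : x = 0
    · exact ⟨1, -d, by ring, by simp [hx], by simp [hx]⟩
    · exact ⟨0, ρ / x, by simp [hd hx], by field_simp; ring, by simp⟩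
  · rintro ⟨y, γ, hstat, -, hcompl⟩ hx
    have hy : y = 0 := (mul_eq_zero.mp hcompl).resolve_left hx
    simpa [hy] using hstat

theorem forall_imp_eq_zero_iff_exists_sq_kkt {ι : Type*} (ρ : ℝ) (d x : ι → ℝ) :
    (∀ i, x i ≠ 0 → d i = 0) ↔
      ∃ y γ : ι → ℝ, (∀ i, d i + γ i * y i = 0) ∧ (∀ i, ρ * (y i - 1) + γ i * x i = 0) ∧
        ∀ i, x i * y i = 0 := by
  simp only [imp_eq_zero_iff_exists_sq_kkt ρ]
  constructor
  · intro hd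
    choose y γ hy using hd
    exact ⟨y, γ, fun i => (hy i).1, fun i => (hy i).2.1, fun i => (hy i).2.2⟩
  · rintro ⟨y, γ, hstat, hpen, hcompl⟩ i
    exact ⟨y i, γ i, hstat i, hpen i, hcompl i⟩

theorem stmt13_general {n m p : ℕ} (f : (Fin n → ℝ) → ℝ)
    (g : (Fin n → ℝ) → Fin m → ℝ) (h : (Fin n → ℝ) → Fin p → ℝ)
    (ρ : ℝ) (xstar : Fin n → ℝ) (lam : Fin m → ℝ) (mu : Fin p → ℝ) :
    ((∀ i, xstar i ≠ 0 → fderiv ℝ (LSP f g h lam mu) xstar (Pi.single i 1) = 0) ∧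
      (∀ j, 0 ≤ lam j) ∧ (∀ j, g xstar j ≤ 0) ∧ (∀ j, lam j * g xstar j = 0) ∧
      (∀ j, h xstar j = 0)) ↔
    (∃ ystar γstar : Fin n → ℝ,
      (∀ i, fderiv ℝ (LSP f g h lam mu) xstar (Pi.single i 1) + γstar i * ystar i = 0) ∧
      (∀ i, ρ * (ystar i - 1) + γstar i * xstar i = 0) ∧
      (∀ j, 0 ≤ lam j) ∧ (∀ j, g xstar j ≤ 0) ∧ (∀ j, lam j * g xstar j = 0) ∧
      (∀ j, h xstar j = 0) ∧ (∀ i, xstar i * ystar i = 0)) := by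
  rw [forall_imp_eq_zero_iff_exists_sq_kkt ρ]
  constructor
  · rintro ⟨⟨y, γ, hstat, hpen, hcompl⟩, hfeas⟩
    exact ⟨y, γ, hstat, hpen, hfeas.1, hfeas.2.1, hfeas.2.2.1, hfeas.2.2.2, hcompl⟩
  · rintro ⟨y, γ, hstat, hpen, hlam, hg, hslack, hh, hcompl⟩
    exact ⟨⟨y, γ, hstat, hpen, hcompl⟩, hlam, hg, hslack, hh⟩

theorem stmt13 {n m p : ℕ} (f : (Fin n → ℝ) → ℝ)
    (g : (Fin n → ℝ) → Fin m → ℝ) (h : (Fin n → ℝ) → Fin p → ℝ)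
    (hf : ContDiff ℝ 1 f) (hg : ∀ j, ContDiff ℝ 1 (fun x => g x j))
    (hh : ∀ j, ContDiff ℝ 1 (fun x => h x j))
    (ρ : ℝ) (hρ : 0 < ρ) (xstar : Fin n → ℝ) (lam : Fin m → ℝ) (mu : Fin p → ℝ) :
    ((∀ i, xstar i ≠ 0 → fderiv ℝ (LSP f g h lam mu) xstar (Pi.single i 1) = 0) ∧
      (∀ j, 0 ≤ lam j) ∧ (∀ j, g xstar j ≤ 0) ∧ (∀ j, lam j * g xstar j = 0) ∧
      (∀ j, h xstar j = 0)) ↔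
    (∃ ystar γstar : Fin n → ℝ,
      (∀ i, fderiv ℝ (LSP f g h lam mu) xstar (Pi.single i 1) + γstar i * ystar i = 0) ∧
      (∀ i, ρ * (ystar i - 1) + γstar i * xstar i = 0) ∧
      (∀ j, 0 ≤ lam j) ∧ (∀ j, g xstar j ≤ 0) ∧ (∀ j, lam j * g xstar j = 0) ∧
      (∀ j, h xstar j = 0) ∧ (∀ i, xstar i * ystar i = 0)) :=
  stmt13_general f g h ρ xstar lam mu
end

section
/- Let g, h be continuously differentiable and let x* be feasible (g(x*) ≤ 0, h(x*) = 0) with active index set I_g(x*) = {i : g_i(x*) = 0} and zero set I₀(x*) = {i : x*_i = 0}. Let y* ∈ ℝ^n satisfy x* ∘ y* = 0 and assume no index i has x*_i = y*_i = 0. Then SP-LICQ at x* (linear independence of {∇g_i(x*) : i ∈ I_g(x*)} ∪ {∇h_j(x*) : j = 1,...,p} ∪ {e_i : i ∈ I₀(x*)} in ℝ^n) holds if and only if the gradients of the active constraints of SPOsq at (x*, y*), namely the vectors (∇g_i(x*), 0) for i ∈ I_g(x*), (∇h_j(x*), 0) for all j, and (y*_i e_i, x*_i e_i) for i = 1,...,n,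 are linearly independent in ℝ^{2n}. -/
/-!
Both families split into a gradient block and a coordinate block, and such a family is
independent iff both blocks are and their spans meet trivially. The vectors `(yᵢ eᵢ, xᵢ eᵢ)` are
the images of the standard basis under `c ↦ (y * c, x * c)`, which is injective because `xᵢ` and
`yᵢ` never vanish together; so they are independent, and `(w, 0)` lies in their span iff `w`
vanishes wherever `xᵢ ≠ 0`, i.e. iff `w` lies in the span of the `eᵢ` with `xᵢ = 0`. Embedding the
gradients by `w ↦ (w, 0)` therefore preserves both conditions.
-/

open Finset

/-- gradient of a scalar function at a point, as a vector in `Fin n → ℝ`. -/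
noncomputable def gradAt {n : ℕ} (φ : (Fin n → ℝ) → ℝ) (x : Fin n → ℝ) : Fin n → ℝ :=
  fun j => fderiv ℝ φ x (Pi.single j 1)

open Submodule LinearMap

lemma Submodule.disjoint_map_iff_disjoint_comap {R M M₂ : Type*} [Ring R] [AddCommGroup M]
    [AddCommGroup M₂] [Module R M] [Module R M₂] {f : M →ₗ[R] M₂} (hf : ker f = ⊥)
    (p : Submodule R M) (q : Submodule R M₂) :
    Disjoint (p.map f) q ↔ Disjoint p (q.comap f) := by
  rw [disjoint_iff, disjoint_iff, map_inf_eq_map_inf_comap, ← le_bot_iff, map_le_iff_le_comap,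
    comap_bot, hf, le_bot_iff]

section Complementarity

variable {K n : Type*} [Field K]

lemma Pi.mem_span_range_single_subtype_iff [Fintype n] [DecidableEq n] (P : n → Prop)
    (w : n → K) :
    w ∈ span K (Set.range fun i : {i // P i} => (Pi.single i.1 1 : n → K)) ↔
      ∀ i, ¬ P i → w i = 0 := by
  have hrange : (Set.range fun i : {i // P i} => (Pi.single i.1 1 : n → K)) =
      Pi.basisFun K n '' {i | P i} := by
    ext; simp
  rw [hrange, Module.Basis.mem_span_image]
  simp [Set.subset_def, not_imp_comm]

variable (x y : n → K)

/-- The transposed Jacobian of `(x, y) ↦ x * y`: its value at `eᵢ` is the gradient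
`(yᵢ eᵢ, xᵢ eᵢ)` of the constraint `xᵢ yᵢ = 0`. -/
def complementarityMap : (n → K) →ₗ[K] (n → K) × (n → K) :=
  (LinearMap.mulLeft K y).prod (LinearMap.mulLeft K x)

@[simp]
lemma complementarityMap_apply (c : n → K) : complementarityMap x y c = (y * c, x * c) := rfl

lemma complementarityMap_single [DecidableEq n] (i : n) :
    complementarityMap x y (Pi.single i 1) = (y i • Pi.single i 1, x i • Pi.single i 1) := by
  ext j <;> by_cases hj : j = i <;> simp [hj]

variable {x y}

lemma ker_complementarityMap (hxy : ∀ i, ¬ (x i = 0 ∧ y i = 0)) :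
    ker (complementarityMap x y) = ⊥ := by
  refine ker_eq_bot'.2 fun c hc => funext fun i => ?_
  have hyc : y i * c i = 0 := congr_fun (congr_arg Prod.fst hc) i
  have hxc : x i * c i = 0 := congr_fun (congr_arg Prod.snd hc) i
  by_contra hci
  exact hxy i ⟨(mul_eq_zero.1 hxc).resolve_right hci, (mul_eq_zero.1 hyc).resolve_right hci⟩

lemma comap_inl_range_complementarityMap [Fintype n] [DecidableEq n]
    (hxy : ∀ i, ¬ (x i = 0 ∧ y i = 0)) :
    (range (complementarityMap x y)).comap (inl K _ _) =
      span K (Set.range fun i : {i // x i = 0} => (Pi.single i.1 1 : n → K)) := by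
  ext w
  rw [mem_comap, LinearMap.mem_range, Pi.mem_span_range_single_subtype_iff]
  constructor
  · rintro ⟨c, hc⟩ i hi
    have hw : y * c = w := congr_arg Prod.fst hc
    have hxc : x * c = 0 := congr_arg Prod.snd hc
    have hci : c i = 0 := (mul_eq_zero.1 (congr_fun hxc i)).resolve_left hi
    rw [← hw, Pi.mul_apply, hci, mul_zero]
  · intro hw
    refine ⟨w / y, ?_⟩
    ext i <;> by_cases hi : x i = 0
    · simp [mul_div_cancel₀ _ fun hy => hxy i ⟨hi, hy⟩]
    all_goals simp [hi, hw i]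

theorem linearIndependent_sumElim_single_iff_complementarity [Fintype n] [DecidableEq n]
    {ι : Type*} (a : ι → n → K) (hxy : ∀ i, ¬ (x i = 0 ∧ y i = 0)) :
    LinearIndependent K (Sum.elim a fun i : {i // x i = 0} => (Pi.single i.1 1 : n → K)) ↔
      LinearIndependent K (Sum.elim (fun j => (a j, (0 : n → K)))
        fun i => (y i • (Pi.single i 1 : n → K), x i • (Pi.single i 1 : n → K))) := by
  have hF : (fun i => (y i • (Pi.single i 1 : n → K), x i • (Pi.single i 1 : n → K))) =
      complementarityMap x y ∘ Pi.basisFun K n := by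
    ext1 i; simp only [Function.comp_apply, Pi.basisFun_apply, complementarityMap_single]
  have hA : (fun j => (a j, (0 : n → K))) = inl K _ _ ∘ a := rfl
  have hinl : ker (inl K (n → K) (n → K)) = ⊥ := ker_inl
  have hE : LinearIndependent K fun i : {i // x i = 0} => (Pi.single i.1 1 : n → K) :=
    (Pi.linearIndependent_single_one n K).comp _ Subtype.val_injective
  rw [linearIndependent_sum, linearIndependent_sum, hF, hA]
  simp only [Sum.elim_comp_inl, Sum.elim_comp_inr]
  rw [LinearMap.linearIndependent_iff _ hinl, Set.range_comp, ← Submodule.map_span,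
    Set.range_comp, ← Submodule.map_span, (Pi.basisFun K n).span_eq, Submodule.map_top,
    disjoint_map_iff_disjoint_comap hinl, comap_inl_range_complementarityMap hxy]
  simp only [hE, (Pi.basisFun K n).linearIndependent.map' _ (ker_complementarityMap hxy),
    true_and]

end Complementarity

theorem stmt14_general {n m p : ℕ}
    (g : (Fin n → ℝ) → Fin m → ℝ) (h : (Fin n → ℝ) → Fin p → ℝ)
    (xstar ystar : Fin n → ℝ)
    (hbi : ∀ i, ¬ (xstar i = 0 ∧ ystar i = 0)) :
    (LinearIndependent ℝ
      (fun v : ({j // g xstar j = 0} ⊕ Fin p ⊕ {i // xstar i = 0}) =>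
        Sum.elim (fun j => gradAt (fun x => g x j.1) xstar)
          (Sum.elim (fun j => gradAt (fun x => h x j) xstar)
            (fun i => (Pi.single i.1 1 : Fin n → ℝ))) v)) ↔
    (LinearIndependent ℝ
      (fun v : ({j // g xstar j = 0} ⊕ Fin p ⊕ Fin n) =>
        Sum.elim
          (fun j => ((gradAt (fun x => g x j.1) xstar, 0) : (Fin n → ℝ) × (Fin n → ℝ)))
          (Sum.elim
            (fun j => ((gradAt (fun x => h x j) xstar, 0) : (Fin n → ℝ) × (Fin n → ℝ)))
            (fun i => ((ystar i • (Pi.single i 1 : Fin n → ℝ), xstar i • (Pi.single i 1 : Fin n → ℝ)) :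
              (Fin n → ℝ) × (Fin n → ℝ)))) v)) := by
  rw [← linearIndependent_equiv (Equiv.sumAssoc _ _ _),
    ← linearIndependent_equiv (Equiv.sumAssoc _ _ _)]
  convert linearIndependent_sumElim_single_iff_complementarity
    (Sum.elim (fun j : {j // g xstar j = 0} => gradAt (fun x => g x j.1) xstar)
      fun j => gradAt (fun x => h x j) xstar) hbi using 2 <;>
    first | rfl | ext ((_ | _) | _) <;> rfl

theorem stmt14 {n m p : ℕ}
    (g : (Fin n → ℝ) → Fin m → ℝ) (h : (Fin n → ℝ) → Fin p → ℝ)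
    (hg : ∀ j, ContDiff ℝ 1 (fun x => g x j))
    (hh : ∀ j, ContDiff ℝ 1 (fun x => h x j))
    (xstar ystar : Fin n → ℝ)
    (hfeas : (∀ j, g xstar j ≤ 0) ∧ (∀ j, h xstar j = 0))
    (hcomp : ∀ i, xstar i * ystar i = 0)
    (hbi : ∀ i, ¬ (xstar i = 0 ∧ ystar i = 0)) :
    (LinearIndependent ℝ
      (fun v : ({j // g xstar j = 0} ⊕ Fin p ⊕ {i // xstar i = 0}) =>
        Sum.elim (fun j => gradAt (fun x => g x j.1) xstar)
          (Sum.elim (fun j => gradAt (fun x => h x j) xstar)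
            (fun i => (Pi.single i.1 1 : Fin n → ℝ))) v)) ↔
    (LinearIndependent ℝ
      (fun v : ({j // g xstar j = 0} ⊕ Fin p ⊕ Fin n) =>
        Sum.elim
          (fun j => ((gradAt (fun x => g x j.1) xstar, 0) : (Fin n → ℝ) × (Fin n → ℝ)))
          (Sum.elim
            (fun j => ((gradAt (fun x => h x j) xstar, 0) : (Fin n → ℝ) × (Fin n → ℝ)))
            (fun i => ((ystar i • (Pi.single i 1 : Fin n → ℝ), xstar i • (Pi.single i 1 : Fin n → ℝ)) :
              (Fin n → ℝ) × (Fin n → ℝ)))) v)) :=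
  stmt14_general g h xstar ystar hbi
end

section
/- Let H ∈ ℝ^{n×n} be symmetric, γ ∈ ℝ^n, ρ > 0, and let S ⊆ {1,...,n}. Suppose dᵀH d > 0 for all nonzero d ∈ ℝ^n with d_i = 0 for i ∈ S. Then for all nonzero pairs (d_x, d_y) ∈ ℝ^n × ℝ^n with (d_x)_i = 0 for i ∈ S and (d_y)_i = 0 for i ∉ S, one has d_xᵀ H d_x + 2 γᵀ(d_x ∘ d_y) + ρ‖d_y‖² > 0. -/
open Finset Matrix

lemma mul_eq_zero_of_zero_on_of_zero_off {ι R : Type*} [MulZeroClass R] {S : Set ι}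
    {x y : ι → R} (hx : ∀ i ∈ S, x i = 0) (hy : ∀ i ∉ S, y i = 0) : x * y = 0 := by
  ext i
  by_cases hi : i ∈ S
  · simp [hx i hi]
  · simp [hy i hi]

lemma sum_sq_pos_of_ne_zero {ι R : Type*} [Fintype ι] [Ring R] [LinearOrder R]
    [IsStrictOrderedRing R] {v : ι → R} (hv : v ≠ 0) : 0 < ∑ i, v i ^ 2 := by
  obtain ⟨j, hj⟩ := Function.ne_iff.mp hv
  exact sum_pos' (fun i _ => sq_nonneg (v i)) ⟨j, mem_univ j, sq_pos_of_ne_zero hj⟩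

theorem stmt15_general {n : ℕ} (H : Matrix (Fin n) (Fin n) ℝ)
    (γ : Fin n → ℝ) (ρ : ℝ) (hρ : 0 < ρ) (S : Finset (Fin n))
    (hpos : ∀ d : Fin n → ℝ, d ≠ 0 → (∀ i ∈ S, d i = 0) → 0 < d ⬝ᵥ H.mulVec d) :
    ∀ dx dy : Fin n → ℝ, (dx, dy) ≠ 0 → (∀ i ∈ S, dx i = 0) → (∀ i ∉ S, dy i = 0) →
      0 < dx ⬝ᵥ H.mulVec dx + 2 * (∑ i, γ i * (dx i * dy i)) + ρ * ∑ i, dy i ^ 2 := by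
  intro dx dy hne hdx hdy
  have hdxdy : dx * dy = 0 := mul_eq_zero_of_zero_on_of_zero_off hdx hdy
  have hcross : ∑ i, γ i * (dx i * dy i) = 0 :=
    sum_eq_zero fun i _ => by rw [← Pi.mul_apply dx dy, hdxdy, Pi.zero_apply, mul_zero]
  rw [hcross, mul_zero, add_zero]
  by_cases hx : dx = 0
  · have hy : dy ≠ 0 := by
      rintro rfl
      exact hne (by simp [hx])
    simpa [hx] using mul_pos hρ (sum_sq_pos_of_ne_zero hy)
  · exact add_pos_of_pos_of_nonneg (hpos dx hx hdx) (by positivity)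

theorem stmt15 {n : ℕ} (H : Matrix (Fin n) (Fin n) ℝ) (hH : H.IsSymm)
    (γ : Fin n → ℝ) (ρ : ℝ) (hρ : 0 < ρ) (S : Finset (Fin n))
    (hpos : ∀ d : Fin n → ℝ, d ≠ 0 → (∀ i ∈ S, d i = 0) → 0 < d ⬝ᵥ H.mulVec d) :
    ∀ dx dy : Fin n → ℝ, (dx, dy) ≠ 0 → (∀ i ∈ S, dx i = 0) → (∀ i ∉ S, dy i = 0) →
      0 < dx ⬝ᵥ H.mulVec dx + 2 * (∑ i, γ i * (dx i * dy i)) + ρ * ∑ i, dy i ^ 2 :=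
  stmt15_general H γ ρ hρ S hpos
end

section
/- Fix ρ > 0. Consider the block matrices H = [[M, D_γ, Gᵀ, Hᵀ, D_y], [D_γ, ρI, 0, 0, D_x], [J₁, 0, J₂, 0, 0], [Hh, 0, 0, 0, 0], [D_y, D_x, 0, 0, 0]] and H_red = [[M - D_γ²/ρ, Gᵀ, Hᵀ, D_{e - 2γ∘x/ρ}], [J₁, J₂, 0, 0], [Hh, 0, 0, 0], [D_{e - 2γ∘x/ρ}, 0, 0, -D_x²/ρ]], where D_v = diag(v), y = e - (γ ∘ x)/ρ, and M is symmetric. Then H is nonsingular if and only if H_red is nonsingular. -/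
open Matrix

/-- Generalized Jacobian of the full KKT operator `T` of SPOsq, with
`y = e - (γ ∘ x)/ρ` substituted. Blocks (rows/cols): x, y, λ, μ, γ. -/
noncomputable def bigH {n m p : ℕ} (ρ : ℝ) (M : Matrix (Fin n) (Fin n) ℝ)
    (G : Matrix (Fin m) (Fin n) ℝ) (Hh : Matrix (Fin p) (Fin n) ℝ)
    (J₁ : Matrix (Fin m) (Fin n) ℝ) (j₂ : Fin m → ℝ) (γ x : Fin n → ℝ) :
    Matrix (Fin n ⊕ Fin n ⊕ Fin m ⊕ Fin p ⊕ Fin n)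
           (Fin n ⊕ Fin n ⊕ Fin m ⊕ Fin p ⊕ Fin n) ℝ :=
  fun r c =>
    match r, c with
    | .inl i, .inl j => M i j
    | .inl i, .inr (.inl j) => if i = j then γ i else 0
    | .inl i, .inr (.inr (.inl a)) => G a i
    | .inl i, .inr (.inr (.inr (.inl b))) => Hh b i
    | .inl i, .inr (.inr (.inr (.inr j))) => if i = j then 1 - γ i * x i / ρ else 0
    | .inr (.inl i), .inl j => if i = j then γ i else 0
    | .inr (.inl i), .inr (.inl j) => if i = j then ρ else 0
    | .inr (.inl i), .inr (.inr (.inr (.inr j))) => if i = j then x i else 0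
    | .inr (.inl _), _ => 0
    | .inr (.inr (.inl a)), .inl j => J₁ a j
    | .inr (.inr (.inl a)), .inr (.inr (.inl a')) => if a = a' then j₂ a else 0
    | .inr (.inr (.inl _)), _ => 0
    | .inr (.inr (.inr (.inl b))), .inl j => Hh b j
    | .inr (.inr (.inr (.inl _))), _ => 0
    | .inr (.inr (.inr (.inr i))), .inl j => if i = j then 1 - γ i * x i / ρ else 0
    | .inr (.inr (.inr (.inr i))), .inr (.inl j) => if i = j then x i else 0
    | .inr (.inr (.inr (.inr _))), _ => 0

/-- Generalized Jacobian of the reduced operator `T_red` (y eliminated).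
Blocks (rows/cols): x, λ, μ, γ. -/
noncomputable def redH {n m p : ℕ} (ρ : ℝ) (M : Matrix (Fin n) (Fin n) ℝ)
    (G : Matrix (Fin m) (Fin n) ℝ) (Hh : Matrix (Fin p) (Fin n) ℝ)
    (J₁ : Matrix (Fin m) (Fin n) ℝ) (j₂ : Fin m → ℝ) (γ x : Fin n → ℝ) :
    Matrix (Fin n ⊕ Fin m ⊕ Fin p ⊕ Fin n) (Fin n ⊕ Fin m ⊕ Fin p ⊕ Fin n) ℝ :=
  fun r c =>
    match r, c with
    | .inl i, .inl j => M i j - (if i = j then γ i ^ 2 / ρ else 0)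
    | .inl i, .inr (.inl a) => G a i
    | .inl i, .inr (.inr (.inl b)) => Hh b i
    | .inl i, .inr (.inr (.inr j)) => if i = j then 1 - 2 * γ i * x i / ρ else 0
    | .inr (.inl a), .inl j => J₁ a j
    | .inr (.inl a), .inr (.inl a') => if a = a' then j₂ a else 0
    | .inr (.inl _), _ => 0
    | .inr (.inr (.inl b)), .inl j => Hh b j
    | .inr (.inr (.inl _)), _ => 0
    | .inr (.inr (.inr i)), .inl j => if i = j then 1 - 2 * γ i * x i / ρ else 0
    | .inr (.inr (.inr i)), .inr (.inr (.inr j)) => if i = j then -(x i ^ 2) / ρ else 0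
    | .inr (.inr (.inr _)), _ => 0

/-!
Reorder the unknowns so that `y` comes first. The `y`-block of `H` is `ρ I`, so by the Schur
determinant formula `det H = ρⁿ · det S`, where `S` is the Schur complement of `ρ I`. Since `y` is
coupled only to `x` (through `D_γ`) and to `γ` (through `D_x`), eliminating it subtracts `D_γ²/ρ`,
`D_{γ∘x}/ρ` twice, and `D_x²/ρ` from the corresponding blocks, and `S` is exactly `H_red`.
-/

def Equiv.sumLeftComm (α β γ : Type*) : α ⊕ β ⊕ γ ≃ β ⊕ α ⊕ γ :=
  (sumAssoc α β γ).symm.trans (((sumComm α β).sumCongr (Equiv.refl γ)).trans (sumAssoc β α γ))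

theorem Matrix.det_fromBlocks_smul_one₁₁ {K l o : Type*} [Field K] [Fintype l] [DecidableEq l]
    [Fintype o] [DecidableEq o] {ρ : K} (hρ : ρ ≠ 0) (B : Matrix l o K) (C : Matrix o l K)
    (D : Matrix o o K) :
    (fromBlocks (ρ • 1) B C D).det = ρ ^ Fintype.card l * (D - ρ⁻¹ • (C * B)).det := by
  let _ : Invertible (ρ • 1 : Matrix l l K) :=
    ⟨ρ⁻¹ • 1, by simp [smul_smul, hρ], by simp [smul_smul, hρ]⟩
  rw [det_fromBlocks₁₁, det_smul, det_one, mul_one,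
    show ⅟(ρ • 1 : Matrix l l K) = ρ⁻¹ • 1 from rfl, Matrix.mul_smul, Matrix.mul_one,
    Matrix.smul_mul]

section

variable {n m p : ℕ} (ρ : ℝ) (M : Matrix (Fin n) (Fin n) ℝ) (G : Matrix (Fin m) (Fin n) ℝ)
  (Hh : Matrix (Fin p) (Fin n) ℝ) (J₁ : Matrix (Fin m) (Fin n) ℝ) (j₂ : Fin m → ℝ)
  (γ x : Fin n → ℝ)

local notation "yFirst" => Equiv.sumLeftComm (Fin n) (Fin n) (Fin m ⊕ Fin p ⊕ Fin n)

theorem bigH_yFirst_toBlocks₁₁ :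
    ((bigH ρ M G Hh J₁ j₂ γ x).submatrix yFirst yFirst).toBlocks₁₁ = ρ • 1 := by
  ext i j
  by_cases h : i = j <;> simp [bigH, Equiv.sumLeftComm, toBlocks₁₁, h, one_apply]

theorem bigH_yFirst_schurComplement_eq_redH :
    let N := (bigH ρ M G Hh J₁ j₂ γ x).submatrix yFirst yFirst
    N.toBlocks₂₂ - ρ⁻¹ • (N.toBlocks₂₁ * N.toBlocks₁₂) = redH ρ M G Hh J₁ j₂ γ x := by
  ext (i | a | b | i) (j | a' | b' | j) <;>
    simp [bigH, redH, Equiv.sumLeftComm, toBlocks₁₂, toBlocks₂₁, toBlocks₂₂, mul_apply] <;>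
    split_ifs with h <;> (try subst h) <;> ring

variable {ρ} in
theorem det_bigH (hρ : ρ ≠ 0) :
    (bigH ρ M G Hh J₁ j₂ γ x).det = ρ ^ n * (redH ρ M G Hh J₁ j₂ γ x).det := by
  rw [← det_submatrix_equiv_self yFirst, ← fromBlocks_toBlocks (submatrix _ _ _),
    bigH_yFirst_toBlocks₁₁, det_fromBlocks_smul_one₁₁ hρ, Fintype.card_fin,
    bigH_yFirst_schurComplement_eq_redH]

end

theorem stmt17_general {n m p : ℕ} (ρ : ℝ) (hρ : 0 < ρ) (M : Matrix (Fin n) (Fin n) ℝ)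
    (G : Matrix (Fin m) (Fin n) ℝ) (Hh : Matrix (Fin p) (Fin n) ℝ)
    (J₁ : Matrix (Fin m) (Fin n) ℝ) (j₂ : Fin m → ℝ) (γ x : Fin n → ℝ) :
    (bigH ρ M G Hh J₁ j₂ γ x).det ≠ 0 ↔ (redH ρ M G Hh J₁ j₂ γ x).det ≠ 0 := by
  simp [det_bigH M G Hh J₁ j₂ γ x hρ.ne', hρ.ne']

theorem stmt17 {n m p : ℕ} (ρ : ℝ) (hρ : 0 < ρ) (M : Matrix (Fin n) (Fin n) ℝ)
    (hM : M.IsSymm) (G : Matrix (Fin m) (Fin n) ℝ) (Hh : Matrix (Fin p) (Fin n) ℝ)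
    (J₁ : Matrix (Fin m) (Fin n) ℝ) (j₂ : Fin m → ℝ) (γ x : Fin n → ℝ) :
    (bigH ρ M G Hh J₁ j₂ γ x).det ≠ 0 ↔ (redH ρ M G Hh J₁ j₂ γ x).det ≠ 0 :=
  stmt17_general ρ hρ M G Hh J₁ j₂ γ x
end

section
/- Let x* be a local minimizer of x ↦ f(x) + ρ‖x‖₀ over X with ρ > 0 and f continuous, and let κ := ‖x*‖₀ and δ := f(x*). Then x* is a global minimizer of f over {x ∈ X : ‖x‖₀ ≤ κ} restricted to a neighborhood of x* (i.e., a local minimizer of the cardinality-constrained problem), and x* is a local minimizer of ‖x‖₀ over {x ∈ X : f(x) ≤ δ}. -/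
/-! A point that locally minimizes `f + ρ g` cannot be beaten nearby by a point that is no worse
for one of the two terms: it would then be strictly better for the sum. Taking `g = ‖·‖₀`
gives the cardinality-constrained problem (no larger cardinality) and the cardinality
minimization problem (no larger objective). -/

open Finset

section

variable {α β : Type*} [TopologicalSpace α] [AddCommMonoid β] [PartialOrder β]
  [IsOrderedCancelAddMonoid β] {f g : α → β} {s : Set α} {a : α}

theorem IsLocalMinOn.of_add_of_le_right (h : IsLocalMinOn (fun x => f x + g x) s a) :
    IsLocalMinOn f {x ∈ s | g x ≤ g a} a := by
  filter_upwards [h.filter_mono (nhdsWithin_mono a fun _ hx => hx.1), self_mem_nhdsWithin]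
    with x hsum hx
  exact le_of_add_le_add_right (hsum.trans (add_le_add_right hx.2 (f x)))

theorem IsLocalMinOn.of_add_of_le_left (h : IsLocalMinOn (fun x => f x + g x) s a) :
    IsLocalMinOn g {x ∈ s | f x ≤ f a} a :=
  IsLocalMinOn.of_add_of_le_right (f := g) (g := f) (by simpa only [add_comm] using h)

end

theorem IsLocalMinOn.of_const_mul {α : Type*} [TopologicalSpace α] {g : α → ℝ} {s : Set α}
    {a : α} {ρ : ℝ} (hρ : 0 < ρ) (h : IsLocalMinOn (fun x => ρ * g x) s a) :
    IsLocalMinOn g s a :=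
  h.mono fun _ hx => le_of_mul_le_mul_left hx hρ

theorem stmt19_general {n : ℕ} (X : Set (Fin n → ℝ)) (f : (Fin n → ℝ) → ℝ)
    (ρ : ℝ) (hρ : 0 < ρ) (xstar : Fin n → ℝ)
    (hmin : IsLocalMinOn (fun x => f x + ρ * norm0 x) X xstar)
    (κ : ℝ) (hκ : κ = norm0 xstar) (δ : ℝ) (hδ : δ = f xstar) :
    IsLocalMinOn f {x ∈ X | norm0 x ≤ κ} xstar ∧
    IsLocalMinOn norm0 {x ∈ X | f x ≤ δ} xstar := by
  subst hκ hδ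
  refine ⟨hmin.of_add_of_le_right.on_subset ?_, (hmin.of_add_of_le_left).of_const_mul hρ⟩
  exact fun x hx => ⟨hx.1, mul_le_mul_of_nonneg_left hx.2 hρ.le⟩

theorem stmt19 {n : ℕ} (X : Set (Fin n → ℝ)) (f : (Fin n → ℝ) → ℝ)
    (hf : Continuous f) (ρ : ℝ) (hρ : 0 < ρ) (xstar : Fin n → ℝ) (hx : xstar ∈ X)
    (hmin : IsLocalMinOn (fun x => f x + ρ * norm0 x) X xstar)
    (κ : ℝ) (hκ : κ = norm0 xstar) (δ : ℝ) (hδ : δ = f xstar) :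
    IsLocalMinOn f {x ∈ X | norm0 x ≤ κ} xstar ∧
    IsLocalMinOn norm0 {x ∈ X | f x ≤ δ} xstar :=
  stmt19_general X f ρ hρ xstar hmin κ hκ δ hδ
end
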